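/- Let π be an odd prime of ℤ[i] with h = ord_π(k). If l ≤ h is even then g(k, πˡ) = φ(πˡ), where φ is the Euler function counting the units of ℤ[i]/(πˡ); if l ≤ h is odd then g(k, πˡ) = 0; and if l = h+1 is even then g(k, πˡ) = −N(π)^{l−1}. -/

import Mathlib

/-- The additive character ẽ(z) = exp(2πi(z/(2i) − z̄/(2i))) on ℂ. -/
noncomputable def etilde (z : ℂ) : ℂ :=
  Complex.exp (2 * Real.pi * Complex.I *
    (z / (2 * Complex.I) - (starRingEnd ℂ) z / (2 * Complex.I)))

/-!
If `π^l ∣ k`, the additive character `ẽ(kx/π^l)` is trivial and only `(x/π)^l` is summed over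
`ℤ[i]/(π^l)`: for even `l` this counts the units, for odd `l` it sums the nontrivial character
`(·/π)`, and that sum vanishes because multiplying by a non-residue permutes the residues while
flipping the sign of the symbol. If `l = h + 1`, write `k = π^h u` with `π ∤ u`; the summand is
`ẽ(ux/π)` off the multiples of `π` and `0` on them. Summed over all residues, `ẽ(ux/π)`
vanishes, since translating by some `t` with `ẽ(ut/π) ≠ 1` multiplies the sum by that value, so
the Gauss sum is minus the number `N(π)^h` of multiples of `π` among the residues.
-/

open Finset

section ResidueSystem

variable {A : Type*} [CommRing A]

def IsCompleteResidueSystem (m : A) (S : Finset A) : Prop :=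
  ∀ y : A, ∃! x, x ∈ S ∧ m ∣ y - x

namespace IsCompleteResidueSystem

variable {m : A} {S : Finset A}

theorem injOn_mk (hS : IsCompleteResidueSystem m S) :
    Set.InjOn (Ideal.Quotient.mk (Ideal.span {m})) S := by
  intro x hx y hy hxy
  rw [Ideal.Quotient.eq, Ideal.mem_span_singleton] at hxy
  exact (hS x).unique ⟨hx, by simp⟩ ⟨hy, hxy⟩

theorem surjOn_mk (hS : IsCompleteResidueSystem m S) :
    Set.SurjOn (Ideal.Quotient.mk (Ideal.span {m})) S Set.univ := by
  rintro r -
  obtain ⟨y, rfl⟩ := Ideal.Quotient.mk_surjective r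
  obtain ⟨x, ⟨hx, hyx⟩, -⟩ := hS y
  exact ⟨x, hx, (Ideal.Quotient.eq.mpr (Ideal.mem_span_singleton.mpr hyx)).symm⟩

theorem finite_quotient (hS : IsCompleteResidueSystem m S) : Finite (A ⧸ Ideal.span {m}) :=
  Set.finite_univ_iff.mp ((S.finite_toSet.image _).subset hS.surjOn_mk)

theorem sum_comp_mk {M : Type*} [AddCommMonoid M] [Fintype (A ⧸ Ideal.span {m})]
    (hS : IsCompleteResidueSystem m S) (F : A ⧸ Ideal.span {m} → M) :
    ∑ x ∈ S, F (Ideal.Quotient.mk _ x) = ∑ r, F r := by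
  classical
  rw [← sum_image hS.injOn_mk]
  congr
  exact eq_univ_of_forall fun r => by simpa using hS.surjOn_mk (Set.mem_univ r)

theorem card_filter_comp_mk (hS : IsCompleteResidueSystem m S)
    (P : A ⧸ Ideal.span {m} → Prop) [DecidablePred P] :
    #{x ∈ S | P (Ideal.Quotient.mk _ x)} = Nat.card {r // P r} := by
  have := hS.finite_quotient
  let := Fintype.ofFinite (A ⧸ Ideal.span {m})
  classical
  rw [card_filter, hS.sum_comp_mk fun r => if P r then 1 else 0, sum_boole, Nat.cast_id,
    Nat.card_eq_fintype_card, Fintype.card_subtype]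

theorem sum_comp_mul_add {M : Type*} [AddCommMonoid M] (hS : IsCompleteResidueSystem m S)
    {f : A → M} (hf : ∀ x y, m ∣ x - y → f x = f y) {c : A} (hc : IsCoprime c m) (t : A) :
    ∑ x ∈ S, f (c * x + t) = ∑ x ∈ S, f x := by
  have := hS.finite_quotient
  let := Fintype.ofFinite (A ⧸ Ideal.span {m})
  let mk := Ideal.Quotient.mk (Ideal.span {m})
  let F : A ⧸ Ideal.span {m} → M := f ∘ Function.surjInv Ideal.Quotient.mk_surjective
  have hF : ∀ x, f x = F (mk x) := fun x =>
    hf _ _ (Ideal.mem_span_singleton.mp (Ideal.Quotient.eq.mp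
      (Function.surjInv_eq Ideal.Quotient.mk_surjective (mk x)).symm))
  have hu : IsUnit (mk c) := by
    obtain ⟨a, b, hab⟩ := hc
    refine IsUnit.of_mul_eq_one (mk a) ?_
    rw [← map_mul, ← map_one mk, Ideal.Quotient.eq, Ideal.mem_span_singleton]
    exact ⟨-b, by linear_combination hab⟩
  simp only [hF, map_add, map_mul]
  rw [hS.sum_comp_mk (fun r => F (mk c * r + mk t)), hS.sum_comp_mk]
  exact ((hu.unit.mulLeft).trans (Equiv.addRight (mk t))).sum_comp F

theorem card_filter_isUnit_mk (hS : IsCompleteResidueSystem m S)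
    [DecidablePred fun x => IsUnit (Ideal.Quotient.mk (Ideal.span {m}) x)] :
    #{x ∈ S | IsUnit (Ideal.Quotient.mk (Ideal.span {m}) x)}
      = Nat.card (A ⧸ Ideal.span {m})ˣ := by
  classical
  convert (hS.card_filter_comp_mk IsUnit).trans ?_
  exact (Nat.card_congr (Equiv.ofInjective _ Units.val_injective)).symm

theorem card_filter_mem_mul_card_quotient (hS : IsCompleteResidueSystem m S) (J : Ideal A)
    (hJ : Ideal.span {m} ≤ J) [DecidablePred (· ∈ J)] :
    #{x ∈ S | x ∈ J} * Nat.card (A ⧸ J) = Nat.card (A ⧸ Ideal.span {m}) := by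
  classical
  have hmem : ∀ x, x ∈ J ↔
      Ideal.Quotient.mk (Ideal.span {m}) x ∈ Submodule.map (Ideal.span {m}).mkQ J := by
    intro x
    change _ ↔ x ∈ Submodule.comap (Ideal.span {m}).mkQ (Submodule.map _ J)
    rw [Submodule.comap_map_mkQ, sup_eq_right.mpr hJ]
  simp_rw [hmem]
  rw [← Submodule.card_quotient_mul_card_quotient J _ hJ]
  convert congrArg (· * Nat.card (A ⧸ J))
    (hS.card_filter_comp_mk (· ∈ Submodule.map (Ideal.span {m}).mkQ J)) using 2

end IsCompleteResidueSystem

end ResidueSystem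

section EulerSymbol

variable {A : Type*} [CommRing A]

/-- With `M = (|A/(p)| - 1) / 2` this characterizes the quadratic residue symbol modulo `p`. -/
def IsEulerSymbol (p : A) (M : ℕ) (q : A → ℤ) : Prop :=
  ∀ a : A, (p ∣ a → q a = 0) ∧
    (¬ p ∣ a → (q a = 1 ∨ q a = -1) ∧ p ∣ a ^ M - (q a : A))

theorem eq_of_dvd_intCast_sub {p : A} (hp2 : ¬ p ∣ 2) {a b : ℤ} (ha : a = 1 ∨ a = -1)
    (hb : b = 1 ∨ b = -1) (h : p ∣ (a : A) - b) : a = b := by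
  rcases ha with rfl | rfl <;> rcases hb with rfl | rfl
  · rfl
  · exact absurd (by simpa [one_add_one_eq_two] using h) hp2
  · refine absurd ?_ hp2
    simpa [← one_add_one_eq_two, ← sub_eq_add_neg, add_comm] using h.neg_right
  · rfl

namespace IsEulerSymbol

variable {p : A} {M : ℕ} {q : A → ℤ}

theorem eq_of_dvd_sub (hq : IsEulerSymbol p M q) (hp2 : ¬ p ∣ 2) {x y : A} (h : p ∣ x - y) :
    q x = q y := by
  by_cases hx : p ∣ x
  · rw [(hq x).1 hx, (hq y).1 (by simpa using dvd_sub hx h)]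
  have hy : ¬ p ∣ y := fun hy => hx (by simpa using dvd_add hy h)
  obtain ⟨hx1, hxM⟩ := (hq x).2 hx
  obtain ⟨hy1, hyM⟩ := (hq y).2 hy
  refine eq_of_dvd_intCast_sub hp2 hx1 hy1 ?_
  have hxy : p ∣ x ^ M - y ^ M := h.trans (sub_dvd_pow_sub_pow x y M)
  convert dvd_add (dvd_sub hxy hxM) hyM using 1
  ring

theorem map_mul (hq : IsEulerSymbol p M q) (hp : Prime p) (hp2 : ¬ p ∣ 2) (x y : A) :
    q (x * y) = q x * q y := by
  by_cases hx : p ∣ x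
  · rw [(hq x).1 hx, (hq _).1 (hx.mul_right y), zero_mul]
  by_cases hy : p ∣ y
  · rw [(hq y).1 hy, (hq _).1 (hy.mul_left x), mul_zero]
  have hxy : ¬ p ∣ x * y := fun h => (hp.dvd_or_dvd h).elim hx hy
  obtain ⟨hx1, hxM⟩ := (hq x).2 hx
  obtain ⟨hy1, hyM⟩ := (hq y).2 hy
  obtain ⟨hxy1, hxyM⟩ := (hq _).2 hxy
  refine eq_of_dvd_intCast_sub hp2 hxy1 ?_ ?_
  · rcases hx1 with h | h <;> rcases hy1 with h' | h' <;> simp [h, h']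
  · convert dvd_add (dvd_sub (hxM.mul_right (y ^ M)) hxyM) (hyM.mul_left (q x : A)) using 1
    push_cast
    ring

theorem pow_of_odd (hq : IsEulerSymbol p M q) {l : ℕ} (hl : Odd l) (x : A) : q x ^ l = q x := by
  by_cases hx : p ∣ x
  · rw [(hq x).1 hx, zero_pow hl.pos.ne']
  · rcases ((hq x).2 hx).1 with h | h <;> rw [h]
    · exact one_pow l
    · exact hl.neg_one_pow

theorem pow_eq_one_of_even (hq : IsEulerSymbol p M q) {l : ℕ} (hl : Even l) {x : A}
    (hx : ¬ p ∣ x) : q x ^ l = 1 := by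
  rcases ((hq x).2 hx).1 with h | h <;> rw [h]
  · exact one_pow l
  · exact hl.neg_one_pow

theorem exists_eq_neg_one [IsDomain A] [IsPrincipalIdealRing A] (hp : Prime p) (hp2 : ¬ p ∣ 2)
    [Finite (A ⧸ Ideal.span {p})]
    (hq : IsEulerSymbol p ((Nat.card (A ⧸ Ideal.span {p}) - 1) / 2) q) :
    ∃ c, ¬ p ∣ c ∧ q c = -1 := by
  have := PrincipalIdealRing.isMaximal_of_irreducible hp.irreducible
  let F := A ⧸ Ideal.span {p}
  let := Ideal.Quotient.field (Ideal.span {p})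
  let := Fintype.ofFinite F
  have mk_eq_zero : ∀ x, Ideal.Quotient.mk (Ideal.span {p}) x = 0 ↔ p ∣ x := fun x => by
    rw [Ideal.Quotient.eq_zero_iff_mem, Ideal.mem_span_singleton]
  have hchar : ringChar F ≠ 2 := by
    intro h
    apply hp2
    rw [← mk_eq_zero, map_ofNat]
    exact_mod_cast (ringChar.spec F 2).mpr h.dvd
  have hcard : (Nat.card F - 1) / 2 = Fintype.card F / 2 := by
    have := FiniteField.even_card_iff_char_two.not.mp hchar
    rw [Nat.card_eq_fintype_card]
    omega
  obtain ⟨a, ha⟩ := FiniteField.exists_nonsquare hchar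
  obtain ⟨c, rfl⟩ := Ideal.Quotient.mk_surjective a
  have hc : ¬ p ∣ c := fun h => ha ((mk_eq_zero c).mpr h ▸ IsSquare.zero)
  refine ⟨c, hc, ((hq c).2 hc).1.resolve_left fun h1 => ha ?_⟩
  rw [FiniteField.isSquare_iff hchar (by rwa [Ne, mk_eq_zero]), ← hcard, ← map_pow,
    ← sub_eq_zero, ← map_one (Ideal.Quotient.mk _), ← map_sub, mk_eq_zero]
  simpa [h1] using ((hq c).2 hc).2

theorem sum_eq_zero [IsDomain A] [IsPrincipalIdealRing A] (hp : Prime p) (hp2 : ¬ p ∣ 2)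
    (hq : IsEulerSymbol p ((Nat.card (A ⧸ Ideal.span {p}) - 1) / 2) q) {l : ℕ} (hl : l ≠ 0)
    {S : Finset A} (hS : IsCompleteResidueSystem (p ^ l) S) : ∑ x ∈ S, q x = 0 := by
  have hle : Ideal.span {p ^ l} ≤ Ideal.span {p} :=
    Ideal.span_singleton_le_span_singleton.mpr (dvd_pow_self p hl)
  have := hS.finite_quotient
  have : Finite (A ⧸ Ideal.span {p}) := .of_surjective _ (Ideal.Quotient.factor_surjective hle)
  obtain ⟨c, hc, hqc⟩ := hq.exists_eq_neg_one hp hp2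
  have hsum := hS.sum_comp_mul_add
    (fun x y h => hq.eq_of_dvd_sub hp2 ((dvd_pow_self p hl).trans h))
    ((hp.coprime_iff_not_dvd.mpr hc).symm.pow_right) 0
  simp only [add_zero, hq.map_mul hp hp2, hqc, neg_one_mul, sum_neg_distrib] at hsum
  omega

end IsEulerSymbol

end EulerSymbol

namespace GaussianInt

def linearEquivFun : GaussianInt ≃ₗ[ℤ] (Fin 2 → ℤ) where
  toFun x := ![x.re, x.im]
  invFun v := ⟨v 0, v 1⟩
  map_add' x y := by ext i; fin_cases i <;> simp
  map_smul' n x := by ext i; fin_cases i <;> simp [zsmul_eq_mul]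
  left_inv x := rfl
  right_inv v := by ext i; fin_cases i <;> rfl

@[simp]
theorem linearEquivFun_apply (x : GaussianInt) : linearEquivFun x = ![x.re, x.im] := rfl

@[simp]
theorem linearEquivFun_symm_apply (v : Fin 2 → ℤ) :
    linearEquivFun.symm v = ⟨v 0, v 1⟩ := rfl

noncomputable def basis : Module.Basis (Fin 2) ℤ GaussianInt :=
  .ofEquivFun linearEquivFun

instance : Module.Free ℤ GaussianInt := .of_basis basis
instance : Module.Finite ℤ GaussianInt := .of_basis basis

theorem algebraNorm_eq_norm (x : GaussianInt) : Algebra.norm ℤ x = Zsqrtd.norm x := by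
  rw [Algebra.norm_eq_matrix_det basis, Matrix.det_fin_two]
  simp [Algebra.leftMulMatrix_eq_repr_mul, basis, Zsqrtd.norm]

theorem card_quotient_span_singleton (w : GaussianInt) :
    Nat.card (GaussianInt ⧸ Ideal.span {w}) = (Zsqrtd.norm w).natAbs := by
  rw [← Submodule.cardQuot_apply, ← Ideal.absNorm_apply, Ideal.absNorm_span_singleton,
    algebraNorm_eq_norm]

end GaussianInt

open Complex GaussianInt

theorem etilde_eq_exp_im (z : ℂ) : etilde z = exp (2 * Real.pi * I * z.im) := by
  rw [etilde, div_sub_div_same, sub_conj]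
  field_simp
  push_cast
  ring_nf

theorem etilde_add (a b : ℂ) : etilde (a + b) = etilde a * etilde b := by
  rw [etilde_eq_exp_im, etilde_eq_exp_im, etilde_eq_exp_im, ← exp_add, add_im, ofReal_add]
  ring_nf

theorem etilde_eq_one_iff {z : ℂ} : etilde z = 1 ↔ ∃ n : ℤ, z.im = n := by
  rw [etilde_eq_exp_im, exp_eq_one_iff]
  have h2πI : 2 * (Real.pi : ℂ) * I ≠ 0 := by simp [Real.pi_ne_zero]
  refine exists_congr fun n => ⟨fun h => ?_, fun h => by rw [h]; push_cast; ring⟩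
  exact_mod_cast mul_left_cancel₀ h2πI (h.trans (mul_comm _ _))

theorem etilde_div_eq_one_of_dvd {w a : GaussianInt} (h : w ∣ a) :
    etilde ((a : ℂ) / w) = 1 := by
  obtain ⟨t, rfl⟩ := h
  rcases eq_or_ne w 0 with rfl | hw
  · simp [etilde_eq_exp_im]
  rw [toComplex_mul, mul_div_cancel_left₀ _ (toComplex_eq_zero.not.mpr hw),
    etilde_eq_one_iff]
  exact ⟨t.im, (intCast_im t).symm⟩

theorem etilde_div_congr {w a b : GaussianInt} (h : w ∣ a - b) :
    etilde ((a : ℂ) / w) = etilde ((b : ℂ) / w) := by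
  rw [show (a : ℂ) = b + ((a - b : GaussianInt) : ℂ) by simp, add_div, etilde_add,
    etilde_div_eq_one_of_dvd h, mul_one]

theorem exists_eq_toComplex_of_etilde_eq_one {z : ℂ} (h : etilde z = 1)
    (hI : etilde (I * z) = 1) :
    ∃ g : GaussianInt, (g : ℂ) = z := by
  obtain ⟨n, hn⟩ := etilde_eq_one_iff.mp h
  obtain ⟨m, hm⟩ := etilde_eq_one_iff.mp hI
  refine ⟨⟨m, n⟩, Complex.ext ?_ ?_⟩
  · simpa using hm.symm
  · simpa using hn.symm

theorem exists_etilde_ne_one {w u : GaussianInt} (hw : w ≠ 0) (hu : ¬ w ∣ u) :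
    ∃ t : GaussianInt, etilde ((u * t : GaussianInt) / (w : ℂ)) ≠ 1 := by
  by_contra! h
  have hw' : (w : ℂ) ≠ 0 := toComplex_eq_zero.not.mpr hw
  obtain ⟨g, hg⟩ : ∃ g : GaussianInt, (g : ℂ) = u / w := by
    refine exists_eq_toComplex_of_etilde_eq_one (by simpa using h 1) ?_
    simpa [toComplex_def', mul_div_assoc, mul_comm] using h ⟨0, 1⟩
  refine hu ⟨g, toComplex_inj.mp ?_⟩
  rw [toComplex_mul, hg, mul_div_cancel₀ _ hw']

theorem sum_etilde_eq_zero {m w u : GaussianInt} {S : Finset GaussianInt}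
    (hS : IsCompleteResidueSystem m S) (hwm : w ∣ m) (hw : w ≠ 0) (hu : ¬ w ∣ u) :
    ∑ x ∈ S, etilde ((u * x : GaussianInt) / (w : ℂ)) = 0 := by
  obtain ⟨t, ht⟩ := exists_etilde_ne_one hw hu
  have hsum := hS.sum_comp_mul_add (f := fun x => etilde ((u * x : GaussianInt) / (w : ℂ)))
    (fun x y h => etilde_div_congr (by simpa [mul_sub] using (hwm.trans h).mul_left u))
    isCoprime_one_left t
  simp only [one_mul, mul_add, toComplex_add, add_div, etilde_add, ← sum_mul] at hsum
  exact eq_zero_of_mul_eq_self_right ht hsum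

namespace GaussianInt

/-- `g(k, w^l)`, with the symbol `(x/w^l)` taken as `(q x)^l` and `x` running over a set `S` of
representatives of `ℤ[i]/(w^l)`. -/
noncomputable def quadraticGaussSum (q : GaussianInt → ℤ) (k w : GaussianInt) (l : ℕ)
    (S : Finset GaussianInt) : ℂ :=
  ∑ x ∈ S, (q x : ℂ) ^ l * etilde ((k * x : GaussianInt) / ((w ^ l : GaussianInt) : ℂ))

section GaussSum

variable {π k : GaussianInt} {q : GaussianInt → ℤ} {S : Finset GaussianInt}

open Classical in
theorem card_filter_dvd {h : ℕ} (hπ : π ≠ 0) (hS : IsCompleteResidueSystem (π ^ (h + 1)) S) :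
    #{x ∈ S | π ∣ x} = (Zsqrtd.norm π).natAbs ^ h := by
  have hcard := hS.card_filter_mem_mul_card_quotient (Ideal.span {π})
    (Ideal.span_singleton_le_span_singleton.mpr (dvd_pow_self π h.succ_ne_zero))
  have hnorm : Zsqrtd.norm (π ^ (h + 1)) = Zsqrtd.norm π ^ (h + 1) :=
    map_pow Zsqrtd.normMonoidHom π (h + 1)
  simp only [Ideal.mem_span_singleton] at hcard
  rw [card_quotient_span_singleton, card_quotient_span_singleton, hnorm, Int.natAbs_pow,
    pow_succ] at hcard
  exact Nat.eq_of_mul_eq_mul_right (Int.natAbs_pos.mpr (norm_pos.mpr hπ).ne') hcard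

theorem quadraticGaussSum_of_dvd_of_even (hπ : Prime π)
    (hq : IsEulerSymbol π (((Zsqrtd.norm π).natAbs - 1) / 2) q) {l : ℕ} (hk : π ^ l ∣ k)
    (hl : Even l) (hS : IsCompleteResidueSystem (π ^ l) S) :
    quadraticGaussSum q k π l S = Nat.card (GaussianInt ⧸ Ideal.span {π ^ l})ˣ := by
  classical
  have := PrincipalIdealRing.isMaximal_of_irreducible hπ.irreducible
  have hterm : ∀ x,
      (q x : ℂ) ^ l * etilde ((k * x : GaussianInt) / ((π ^ l : GaussianInt) : ℂ))
      = if IsUnit (Ideal.Quotient.mk (Ideal.span {π ^ l}) x) then 1 else 0 := by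
    intro x
    rw [etilde_div_eq_one_of_dvd (dvd_mul_of_dvd_left hk x), mul_one]
    rcases eq_or_ne l 0 with rfl | hl0
    · have : Subsingleton (GaussianInt ⧸ Ideal.span {π ^ 0}) :=
        Ideal.Quotient.subsingleton_iff.mpr (by simp)
      rw [if_pos (isUnit_of_subsingleton _), pow_zero]
    have hunit : IsUnit (Ideal.Quotient.mk (Ideal.span {π ^ l}) x) ↔ ¬ π ∣ x := by
      rw [← Ideal.span_singleton_pow, Ideal.Quotient.isUnit_mk_pow_iff_notMem _ hl0,
        Ideal.mem_span_singleton]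
    split_ifs with hx
    · exact_mod_cast hq.pow_eq_one_of_even hl (hunit.mp hx)
    · simp [(hq x).1 (not_not.mp (hunit.not.mp hx)), hl0]
  rw [quadraticGaussSum, sum_congr rfl fun x _ => hterm x, sum_boole, hS.card_filter_isUnit_mk]

theorem quadraticGaussSum_of_dvd_of_odd (hπ : Prime π) (hπ2 : ¬ π ∣ 2)
    (hq : IsEulerSymbol π (((Zsqrtd.norm π).natAbs - 1) / 2) q) {l : ℕ} (hk : π ^ l ∣ k)
    (hl : Odd l) (hS : IsCompleteResidueSystem (π ^ l) S) :
    quadraticGaussSum q k π l S = 0 := by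
  rw [← card_quotient_span_singleton] at hq
  have hterm : ∀ x,
      (q x : ℂ) ^ l * etilde ((k * x : GaussianInt) / ((π ^ l : GaussianInt) : ℂ))
      = q x := by
    intro x
    rw [etilde_div_eq_one_of_dvd (dvd_mul_of_dvd_left hk x), mul_one]
    exact_mod_cast hq.pow_of_odd hl x
  rw [quadraticGaussSum, sum_congr rfl fun x _ => hterm x]
  exact_mod_cast hq.sum_eq_zero hπ hπ2 hl.pos.ne' hS

theorem quadraticGaussSum_of_succ_of_even (hπ : Prime π)
    (hq : IsEulerSymbol π (((Zsqrtd.norm π).natAbs - 1) / 2) q) {h : ℕ} (hk : π ^ h ∣ k)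
    (hk' : ¬ π ^ (h + 1) ∣ k) (hl : Even (h + 1))
    (hS : IsCompleteResidueSystem (π ^ (h + 1)) S) :
    quadraticGaussSum q k π (h + 1) S = -((Zsqrtd.norm π).natAbs : ℂ) ^ h := by
  classical
  obtain ⟨u, rfl⟩ := hk
  have hu : ¬ π ∣ u := fun ⟨v, hv⟩ => hk' ⟨v, by rw [hv]; ring⟩
  have hπh : ((π ^ h : GaussianInt) : ℂ) ≠ 0 :=
    toComplex_eq_zero.not.mpr (pow_ne_zero h hπ.ne_zero)
  have hterm : ∀ x, (q x : ℂ) ^ (h + 1) *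
        etilde ((π ^ h * u * x : GaussianInt) / ((π ^ (h + 1) : GaussianInt) : ℂ))
      = etilde ((u * x : GaussianInt) / (π : ℂ)) - if π ∣ x then 1 else 0 := by
    intro x
    rw [mul_assoc, pow_succ π h, toComplex_mul (π ^ h), toComplex_mul (π ^ h),
      mul_div_mul_left _ _ hπh]
    split_ifs with hx
    · rw [(hq x).1 hx, etilde_div_eq_one_of_dvd (dvd_mul_of_dvd_right hx u)]
      simp
    · rw [sub_zero, show (q x : ℂ) ^ (h + 1) = 1 by exact_mod_cast hq.pow_eq_one_of_even hl hx,
        one_mul]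
  rw [quadraticGaussSum, sum_congr rfl fun x _ => hterm x, sum_sub_distrib,
    sum_etilde_eq_zero hS (dvd_pow_self π h.succ_ne_zero) hπ.ne_zero hu, sum_boole,
    card_filter_dvd hπ.ne_zero hS]
  push_cast
  ring

end GaussSum

end GaussianInt

theorem stmt_13 (π' : GaussianInt) (hπ : Prime π') (hodd : IsCoprime π' (2 : GaussianInt))
    (q : GaussianInt → ℤ)
    -- q is the quadratic residue symbol mod π', characterized by the Euler criterion
    (hq : ∀ a : GaussianInt,
      (π' ∣ a → q a = 0) ∧
      (¬ π' ∣ a → (q a = 1 ∨ q a = -1) ∧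
        π' ∣ (a ^ (((Zsqrtd.norm π').natAbs - 1) / 2) - (q a : GaussianInt))))
    (l h : ℕ) (k : GaussianInt)
    (hk : π' ^ h ∣ k ∧ ¬ π' ^ (h + 1) ∣ k)  -- h = ord_π'(k)
    (S : Finset GaussianInt)
    (hS : ∀ y : GaussianInt, ∃! x, x ∈ S ∧ π' ^ l ∣ (y - x)) :
    -- the Gauss sum g(k, π'^l), with (x/π'^l) = (x/π')^l
    (l ≤ h → Even l →
      ∑ x ∈ S, ((q x : ℂ)) ^ l *
         etilde (GaussianInt.toComplex (k * x) / GaussianInt.toComplex (π' ^ l))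
        = (Nat.card ((GaussianInt ⧸ Ideal.span {π' ^ l}))ˣ : ℂ)) ∧
    (l ≤ h → Odd l →
      ∑ x ∈ S, ((q x : ℂ)) ^ l *
         etilde (GaussianInt.toComplex (k * x) / GaussianInt.toComplex (π' ^ l)) = 0) ∧
    (l = h + 1 → Even l →
      ∑ x ∈ S, ((q x : ℂ)) ^ l *
         etilde (GaussianInt.toComplex (k * x) / GaussianInt.toComplex (π' ^ l))
        = -(((Zsqrtd.norm π').natAbs : ℂ)) ^ (l - 1)) := by
  have hπ2 : ¬ π' ∣ 2 := hπ.coprime_iff_not_dvd.mp hodd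
  refine ⟨fun hlh hl => ?_, fun hlh hl => ?_, fun hlh hl => ?_⟩
  · exact quadraticGaussSum_of_dvd_of_even hπ hq ((pow_dvd_pow π' hlh).trans hk.1) hl hS
  · exact quadraticGaussSum_of_dvd_of_odd hπ hπ2 hq ((pow_dvd_pow π' hlh).trans hk.1) hl hS
  · subst hlh
    exact quadraticGaussSum_of_succ_of_even hπ hq hk.1 hk.2 hl hS
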